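/- arXiv:1210.4963 — 6 statements merged into one kernel-verified Lean document; each statement's English description precedes it below -/
import Mathlib

section
/- Let x_1, …, x_n ∈ ℝ^p, y_1, …, y_n ∈ ℝ, let I ⊆ {1, …, n} with |I| ≥ p + 1, and suppose θ* ∈ ℝ^p is a global minimizer of ρ_I(θ) = max_{i ∈ I} |y_i − x_iᵀθ|. Then there exist a subset I* ⊆ I with 1 ≤ |I*| ≤ p + 1, signs ε_i ∈ {−1, 1} and reals λ_i > 0 for i ∈ I*, such that Σ_{i ∈ I*} λ_i ε_i x_i = 0, Σ_{i ∈ I*} λ_i = 1, and ε_i (y_i − x_iᵀθ*) = ρ_I(θ*) for every i ∈ I* (i.e. the constraints indexed by I* are active at θ*). -/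
/-!
If the minimal value `ρ` is positive and `0` is not in the convex hull of the signed active
vectors `sign(rᵢ) xᵢ`, a separating direction `d` has `sign(rᵢ) ⟪xᵢ, d⟫ > 0` on every active
index, so moving `θ*` a little along `d` strictly lowers every active residual while the inactive
ones stay below `ρ`, contradicting minimality. If `ρ = 0`, every residual vanishes, every sign is
admissible, and the signs are read off a nontrivial linear relation among `p + 1` of the `xᵢ`.
In both cases Carathéodory's theorem in `ℝᵖ` cuts the convex combination down to at most
`p + 1` affinely independent points, hence to at most `p + 1` indices.
-/

open Finset Module

theorem SignType.coe_sign_eq_one_or_neg_one {R : Type*} [Ring R] [LinearOrder R]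
    [IsStrictOrderedRing R] {a : R} (h : a ≠ 0) :
    (SignType.sign a : R) = 1 ∨ (SignType.sign a : R) = -1 := by
  rcases h.lt_or_gt with h | h <;> simp [h]

theorem exists_nontrivial_linear_relation_of_finrank_lt_card {ι K E : Type*} [DivisionRing K]
    [AddCommGroup E] [Module K E] [FiniteDimensional K E] (v : ι → E) {S : Finset ι}
    (h : finrank K E < #S) : ∃ c : ι → K, ∑ i ∈ S, c i • v i = 0 ∧ ∃ i ∈ S, c i ≠ 0 := by
  have hdep : ¬ LinearIndependent K (fun i : S => v i) := fun hli =>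
    h.not_ge (by simpa using hli.fintype_card_le_finrank)
  obtain ⟨g, hg, k, hk⟩ := Fintype.not_linearIndependent_iff.1 hdep
  refine ⟨Subtype.val.extend g 0, ?_, k, k.2, by rwa [Subtype.val_injective.extend_apply]⟩
  rw [← sum_coe_sort, ← hg]
  simp

section ConvexCombination

variable {ι 𝕜 E : Type*} [Field 𝕜] [LinearOrder 𝕜] [IsStrictOrderedRing 𝕜] [AddCommGroup E]
  [Module 𝕜 E]

theorem exists_subset_pos_combination_of_mem_convexHull [FiniteDimensional 𝕜 E]
    {f : ι → E} {A : Finset ι} {q : E} (hq : q ∈ convexHull 𝕜 (f '' A)) :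
    ∃ B ⊆ A, #B ≤ finrank 𝕜 E + 1 ∧ ∃ w : ι → 𝕜,
      (∀ i ∈ B, 0 < w i) ∧ ∑ i ∈ B, w i = 1 ∧ ∑ i ∈ B, w i • f i = q := by
  obtain ⟨κ, _, z, w, hzA, hz, hw, hw1, hwz⟩ := eq_pos_convex_span_of_mem_convexHull hq
  choose φ hφA hφz using fun k => hzA (Set.mem_range_self k)
  have hφ : Function.Injective φ := fun k l h => hz.injective (by rw [← hφz, h, hφz])
  refine ⟨univ.map ⟨φ, hφ⟩, fun i hi => ?_, ?_, Function.extend φ w 0, ?_, ?_, ?_⟩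
  · obtain ⟨k, -, rfl⟩ := mem_map.1 hi
    exact hφA k
  · rw [card_map, card_univ]
    exact hz.card_le_finrank_succ.trans (by gcongr; exact Submodule.finrank_le _)
  · simp only [Finset.mem_map, mem_univ, true_and]
    rintro _ ⟨k, rfl⟩
    simpa [hφ.extend_apply] using hw k
  · simpa [hφ.extend_apply] using hw1
  · simpa [hφ.extend_apply, hφz] using hwz

theorem zero_mem_convexHull_sign_smul_of_sum_smul_eq_zero {v : ι → E}
    {S : Finset ι} {c : ι → 𝕜} (hc : ∑ i ∈ S, c i • v i = 0) (hne : ∃ i ∈ S, c i ≠ 0) :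
    (0 : E) ∈ convexHull 𝕜
      ((fun i => (SignType.sign (c i) : 𝕜) • v i) '' ({i ∈ S | c i ≠ 0} : Finset ι)) := by
  obtain ⟨k, hkS, hk⟩ := hne
  have hmass := {i ∈ S | c i ≠ 0}.centerMass_mem_convexHull (w := fun i => |c i|)
    (fun i _ => abs_nonneg _) (sum_pos' (fun i _ => abs_nonneg _) ⟨k, by simp [hkS, hk]⟩)
    (z := fun i => (SignType.sign (c i) : 𝕜) • v i) (fun i hi => Set.mem_image_of_mem _ hi)
  have hrel : ∑ i ∈ S with c i ≠ 0, |c i| • (SignType.sign (c i) : 𝕜) • v i = 0 := by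
    simp only [smul_smul, abs_mul_sign]
    rw [sum_filter_of_ne fun i _ => left_ne_zero_of_smul, hc]
  convert hmass using 1
  rw [Finset.centerMass, hrel, smul_zero]

end ConvexCombination

section Descent

open Filter Topology

theorem eventually_abs_sub_mul_lt_of_abs_lt {a c ρ : ℝ} (h : |a| < ρ) :
    ∀ᶠ t in 𝓝 0, |a - t * c| < ρ := by
  have hcont : Continuous fun t : ℝ => |a - t * c| := by fun_prop
  exact (hcont.tendsto' 0 |a| (by simp)).eventually_lt_const h

theorem eventually_abs_sub_mul_lt_abs {a c : ℝ} (h : 0 < a * c) :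
    ∀ᶠ t in 𝓝[>] 0, |a - t * c| < |a| := by
  have hsmall : ∀ᶠ t in 𝓝[>] (0 : ℝ), t * c ^ 2 < a * c :=
    nhdsWithin_le_nhds <|
      ((continuous_id.mul continuous_const).tendsto' 0 0 (by simp)).eventually_lt_const h
  filter_upwards [hsmall, self_mem_nhdsWithin] with t hsmall (ht : 0 < t)
  rw [← sq_lt_sq]
  nlinarith

variable {ι : Type*}

theorem exists_sup'_abs_sub_mul_lt {I : Finset ι} (hI : I.Nonempty) {r c : ι → ℝ}
    (hc : ∀ i ∈ I, |r i| = I.sup' hI (|r ·|) → 0 < r i * c i) :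
    ∃ t, I.sup' hI (fun i => |r i - t * c i|) < I.sup' hI (|r ·|) := by
  have hlt : ∀ i ∈ I, ∀ᶠ t in 𝓝[>] 0, |r i - t * c i| < I.sup' hI (|r ·|) := by
    intro i hi
    rcases (le_sup' (|r ·|) hi).lt_or_eq with hlt | heq
    · exact nhdsWithin_le_nhds (eventually_abs_sub_mul_lt_of_abs_lt hlt)
    · exact heq ▸ eventually_abs_sub_mul_lt_abs (hc i hi heq)
  obtain ⟨t, ht⟩ := ((eventually_all_finset I).2 hlt).exists
  exact ⟨t, (sup'_lt_iff hI).2 ht⟩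

end Descent

theorem exists_dotProduct_pos_of_zero_notMem_convexHull {m : Type*} [Fintype m]
    {s : Set (m → ℝ)} (hs : s.Finite) (h0 : 0 ∉ convexHull ℝ s) :
    ∃ d : m → ℝ, ∀ v ∈ s, 0 < v ⬝ᵥ d := by
  classical
  obtain ⟨f, u, hf0, hfs⟩ := geometric_hahn_banach_point_closed (convex_convexHull ℝ s)
    (hs.isClosed_convexHull (𝕜 := ℝ)) h0
  refine ⟨fun j => f (Pi.single j 1), fun v hv => ?_⟩
  have hfv : f v = v ⬝ᵥ fun j => f (Pi.single j 1) := by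
    conv_lhs => rw [pi_eq_sum_univ' v, map_sum]
    simp [dotProduct]
  rw [← hfv]
  exact (map_zero f ▸ hf0).trans (hfs v (subset_convexHull ℝ s hv))

section Chebyshev

variable {ι m : Type*} [Fintype m]

def chebyshevResidual (x : ι → m → ℝ) (y : ι → ℝ) (I : Finset ι) (hI : I.Nonempty)
    (θ : m → ℝ) : ℝ :=
  I.sup' hI fun i => |y i - x i ⬝ᵥ θ|

theorem abs_sub_dotProduct_le_chebyshevResidual (x : ι → m → ℝ) (y : ι → ℝ) {I : Finset ι}
    (hI : I.Nonempty) (θ : m → ℝ) {i : ι} (hi : i ∈ I) :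
    |y i - x i ⬝ᵥ θ| ≤ chebyshevResidual x y I hI θ :=
  le_sup' (fun i => |y i - x i ⬝ᵥ θ|) hi

theorem zero_mem_convexHull_sign_smul_of_forall_chebyshevResidual_le {x : ι → m → ℝ} {y : ι → ℝ}
    {I : Finset ι} (hI : I.Nonempty) {θs : m → ℝ}
    (hmin : ∀ θ, chebyshevResidual x y I hI θs ≤ chebyshevResidual x y I hI θ)
    (hpos : 0 < chebyshevResidual x y I hI θs) :
    (0 : m → ℝ) ∈ convexHull ℝ ((fun i => (SignType.sign (y i - x i ⬝ᵥ θs) : ℝ) • x i) ''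
      ({i ∈ I | |y i - x i ⬝ᵥ θs| = chebyshevResidual x y I hI θs} : Finset ι)) := by
  by_contra h0
  obtain ⟨d, hd⟩ := exists_dotProduct_pos_of_zero_notMem_convexHull ((finite_toSet _).image _) h0
  obtain ⟨t, ht⟩ := exists_sup'_abs_sub_mul_lt hI (r := fun i => y i - x i ⬝ᵥ θs)
    (c := fun i => x i ⬝ᵥ d) fun i hi hact => by
      have hsign := hd _ (Set.mem_image_of_mem _ (mem_filter.2 ⟨hi, hact⟩))
      rw [smul_dotProduct, smul_eq_mul] at hsign
      rw [← abs_mul_sign (y i - x i ⬝ᵥ θs), mul_assoc]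
      exact mul_pos (hact ▸ hpos) hsign
  refine (hmin (θs + t • d)).not_gt (lt_of_eq_of_lt ?_ ht)
  simp only [chebyshevResidual, dotProduct_add, dotProduct_smul, smul_eq_mul, sub_add_eq_sub_sub]

end Chebyshev

/-- Necessary optimality condition for the Chebyshev problem: if `θ*` globally minimizes
`ρ_I(θ) = max_{i ∈ I} |y i − x iᵀ θ|` with `|I| ≥ p + 1`, then there are a subset
`I* ⊆ I` with `1 ≤ |I*| ≤ p + 1`, signs `ε i ∈ {−1, 1}` and reals `λ i > 0` for `i ∈ I*`
such that `Σ_{i ∈ I*} λ i ε i x i = 0`, `Σ_{i ∈ I*} λ i = 1`, and every index of `I*`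
is active at `θ*`, i.e. `ε i (y i − x iᵀ θ*) = ρ_I(θ*)` for all `i ∈ I*`. -/
theorem chebyshev_optimality_necessary (n p : ℕ) (x : Fin n → Fin p → ℝ) (y : Fin n → ℝ)
    (I : Finset (Fin n)) (hI : I.Nonempty) (hcard : p + 1 ≤ I.card) (θs : Fin p → ℝ)
    (hmin : ∀ θ : Fin p → ℝ,
      I.sup' hI (fun i => |y i - ∑ j, x i j * θs j|) ≤
        I.sup' hI (fun i => |y i - ∑ j, x i j * θ j|)) :
    ∃ Is : Finset (Fin n), Is ⊆ I ∧ 1 ≤ Is.card ∧ Is.card ≤ p + 1 ∧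
      ∃ ε lam : Fin n → ℝ,
        (∀ i ∈ Is, ε i = 1 ∨ ε i = -1) ∧
        (∀ i ∈ Is, 0 < lam i) ∧
        (∑ i ∈ Is, (lam i * ε i) • x i) = 0 ∧
        (∑ i ∈ Is, lam i) = 1 ∧
        (∀ i ∈ Is, ε i * (y i - ∑ j, x i j * θs j) =
          I.sup' hI (fun i => |y i - ∑ j, x i j * θs j|)) := by
  classical
  set ρ := chebyshevResidual x y I hI θs
  obtain ⟨A, hAI, ε, hε, hεr, h0⟩ : ∃ A ⊆ I, ∃ ε : Fin n → ℝ, (∀ i ∈ A, ε i = 1 ∨ ε i = -1) ∧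
      (∀ i ∈ A, ε i * (y i - x i ⬝ᵥ θs) = ρ) ∧
      (0 : Fin p → ℝ) ∈ convexHull ℝ ((fun i => ε i • x i) '' A) := by
    have hres (i : Fin n) (hi : i ∈ I) : |y i - x i ⬝ᵥ θs| ≤ ρ :=
      abs_sub_dotProduct_le_chebyshevResidual x y hI θs hi
    rcases ((abs_nonneg _).trans (hres _ hI.choose_spec)).eq_or_lt with hρ0 | hρ0
    · obtain ⟨S, hSI, hS⟩ := exists_subset_card_eq hcard
      obtain ⟨c, hc, hne⟩ :=
        exists_nontrivial_linear_relation_of_finrank_lt_card (K := ℝ) x (S := S) (by simp [hS])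
      refine ⟨{i ∈ S | c i ≠ 0}, (filter_subset _ _).trans hSI, fun i => SignType.sign (c i),
        fun i hi => SignType.coe_sign_eq_one_or_neg_one (mem_filter.1 hi).2, fun i hi => ?_,
        zero_mem_convexHull_sign_smul_of_sum_smul_eq_zero hc hne⟩
      rw [abs_nonpos_iff.1 ((hres i (hSI (mem_filter.1 hi).1)).trans hρ0.ge), mul_zero, hρ0]
    · refine ⟨_, filter_subset _ _, _, fun i hi => SignType.coe_sign_eq_one_or_neg_one ?_,
        fun i hi => ?_, zero_mem_convexHull_sign_smul_of_forall_chebyshevResidual_le hI hmin hρ0⟩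
      · exact abs_pos.1 ((mem_filter.1 hi).2 ▸ hρ0)
      · rw [sign_mul_self]
        exact (mem_filter.1 hi).2
  obtain ⟨B, hBA, hBcard, lam, hlam, hsum, hcomb⟩ :=
    exists_subset_pos_combination_of_mem_convexHull h0
  refine ⟨B, hBA.trans hAI, card_pos.2 (nonempty_of_sum_ne_zero (hsum ▸ one_ne_zero)),
    by simpa using hBcard, ε, lam, fun i hi => hε i (hBA hi), hlam, ?_, hsum,
    fun i hi => hεr i (hBA hi)⟩
  simpa [mul_smul] using hcomb
end

section
/- Let x_1, …, x_n ∈ ℝ^p, y_1, …, y_n ∈ ℝ, fix 0 ≤ k ≤ n − (p + 1), and define f_k(θ) = min over all subsets I ⊆ {1, …, n} with |I| = n − k of ρ_I(θ), where ρ_I(θ) = max_{i ∈ I} |y_i − x_iᵀθ|. If θ* ∈ ℝ^p is a local minimizer of f_k, then there exists a subset I ⊆ {1, …, n} with |I| = n − k such that ρ_I(θ*) = f_k(θ*) and θ* is a global minimizer of ρ_I over ℝ^p. -/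
/-! Each `ρ_I` is a maximum of absolute values of affine functions, hence convex, and `f_k` is
their pointwise minimum. A subset `I` attaining the minimum at `θ*` gives `ρ_I ≥ f_k` with equality
at `θ*`, so `θ*` is a local, hence (by convexity) global, minimizer of `ρ_I`. -/

/-- The Chebyshev (l∞) residual function `ρ_I(θ) = max_{i ∈ I} |y i − x iᵀ θ|`
(defined as `0` for empty `I`). -/
noncomputable def rho (n p : ℕ) (x : Fin n → Fin p → ℝ) (y : Fin n → ℝ)
    (I : Finset (Fin n)) (θ : Fin p → ℝ) : ℝ :=
  if hI : I.Nonempty then I.sup' hI (fun i => |y i - ∑ j, x i j * θ j|) else 0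

/-- `f_k(θ) = min_{I ⊆ {1,…,n}, |I| = n − k} ρ_I(θ)` (defined as `0` if no such `I`). -/
noncomputable def fk (n p : ℕ) (x : Fin n → Fin p → ℝ) (y : Fin n → ℝ) (k : ℕ)
    (θ : Fin p → ℝ) : ℝ :=
  if h : (Finset.powersetCard (n - k) (Finset.univ : Finset (Fin n))).Nonempty then
    (Finset.powersetCard (n - k) (Finset.univ : Finset (Fin n))).inf' h
      (fun I => rho n p x y I θ)
  else 0

open Set

theorem convexOn_univ_abs_sub_linear {E : Type*} [AddCommGroup E] [Module ℝ E] (c : ℝ)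
    (ℓ : E →ₗ[ℝ] ℝ) : ConvexOn ℝ univ fun v => |c - ℓ v| :=
  convexOn_univ_norm.comp_affineMap (AffineMap.const ℝ E c - ℓ.toAffineMap)

theorem ConvexOn.finset_sup' {𝕜 E β ι : Type*} [Semiring 𝕜] [PartialOrder 𝕜] [AddCommMonoid E]
    [AddCommMonoid β] [LinearOrder β] [IsOrderedAddMonoid β] [SMul 𝕜 E] [Module 𝕜 β]
    [PosSMulStrictMono 𝕜 β] {s : Set E} {I : Finset ι} (hI : I.Nonempty) {f : ι → E → β}
    (hf : ∀ i ∈ I, ConvexOn 𝕜 s (f i)) : ConvexOn 𝕜 s fun v => I.sup' hI fun i => f i v := by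
  simpa only [← Finset.sup'_apply] using
    Finset.sup'_induction hI f (p := ConvexOn 𝕜 s) (fun _ hg _ hh => hg.sup hh) hf

theorem IsLocalMin.of_le_of_eq {α β : Type*} [TopologicalSpace α] [Preorder β] {f g : α → β}
    {a : α} (hf : IsLocalMin f a) (hle : f ≤ g) (heq : g a = f a) : IsLocalMin g a :=
  hf.mono fun v hv => heq ▸ hv.trans (hle v)

theorem rho_convexOn (n p : ℕ) (x : Fin n → Fin p → ℝ) (y : Fin n → ℝ) (I : Finset (Fin n)) :
    ConvexOn ℝ univ (rho n p x y I) := by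
  unfold rho
  split_ifs with hI
  · exact ConvexOn.finset_sup' hI fun i _ =>
      convexOn_univ_abs_sub_linear (y i) (dotProductBilin ℝ ℝ (x i))
  · exact convexOn_const 0 convex_univ

theorem exists_rho_eq_fk (n p : ℕ) (x : Fin n → Fin p → ℝ) (y : Fin n → ℝ) (k : ℕ)
    (θ : Fin p → ℝ) : ∃ I : Finset (Fin n), I.card = n - k ∧ rho n p x y I θ = fk n p x y k θ := by
  have hne : (Finset.powersetCard (n - k) (Finset.univ : Finset (Fin n))).Nonempty :=
    Finset.powersetCard_nonempty.mpr (by simp)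
  obtain ⟨I, hI, hmin⟩ := Finset.exists_mem_eq_inf' hne fun I => rho n p x y I θ
  exact ⟨I, (Finset.mem_powersetCard.mp hI).2, by rw [fk, dif_pos hne, hmin]⟩

theorem fk_le_rho (n p : ℕ) (x : Fin n → Fin p → ℝ) (y : Fin n → ℝ) (k : ℕ)
    {I : Finset (Fin n)} (hI : I.card = n - k) (θ : Fin p → ℝ) :
    fk n p x y k θ ≤ rho n p x y I θ := by
  have hmem : I ∈ Finset.powersetCard (n - k) Finset.univ :=
    Finset.mem_powersetCard.mpr ⟨Finset.subset_univ I, hI⟩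
  rw [fk, dif_pos ⟨I, hmem⟩]
  exact Finset.inf'_le _ hmem

theorem localMin_fk_is_globalMin_rho_general (n p k : ℕ)
    (x : Fin n → Fin p → ℝ) (y : Fin n → ℝ) (θs : Fin p → ℝ)
    (hloc : IsLocalMin (fk n p x y k) θs) :
    ∃ I : Finset (Fin n), I.card = n - k ∧
      rho n p x y I θs = fk n p x y k θs ∧
      ∀ θ : Fin p → ℝ, rho n p x y I θs ≤ rho n p x y I θ := by
  obtain ⟨I, hI, heq⟩ := exists_rho_eq_fk n p x y k θs
  have hlocI : IsLocalMin (rho n p x y I) θs := hloc.of_le_of_eq (fk_le_rho n p x y k hI) heq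
  exact ⟨I, hI, heq, IsMinOn.of_isLocalMin_of_convex_univ hlocI (rho_convexOn n p x y I)⟩

/-- If `θ*` is a local minimizer of `f_k`, then there is a subset `I` of size `n − k`
with `ρ_I(θ*) = f_k(θ*)` such that `θ*` is a global minimizer of `ρ_I`. -/
theorem localMin_fk_is_globalMin_rho (n p k : ℕ) (hpn : p + 1 ≤ n) (hk : k ≤ n - (p + 1))
    (x : Fin n → Fin p → ℝ) (y : Fin n → ℝ) (θs : Fin p → ℝ)
    (hloc : IsLocalMin (fk n p x y k) θs) :
    ∃ I : Finset (Fin n), I.card = n - k ∧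
      rho n p x y I θs = fk n p x y k θs ∧
      ∀ θ : Fin p → ℝ, rho n p x y I θs ≤ rho n p x y I θ :=
  localMin_fk_is_globalMin_rho_general n p k x y θs hloc
end

section
/- Let n ≥ p + 1, let x_1, …, x_n ∈ ℝ^p satisfy the Haar condition (every p of the vectors x_1, …, x_n are linearly independent), and let y_1, …, y_n ∈ ℝ. Then the Chebyshev problem min_{θ ∈ ℝ^p} max_{1 ≤ i ≤ n} |y_i − x_iᵀθ| has a unique solution; i.e., the function f_0(θ) = max_{1 ≤ i ≤ n} |y_i − x_iᵀθ| has exactly one global minimizer, and hence exactly one local minimizer (M_0 = 1). -/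
open Finset Matrix Topology

theorem Matrix.mulVec_surjective_of_linearIndependent_rows {m n K : Type*} [Fintype m]
    [Fintype n] [Field K] {M : Matrix m n K} (hM : LinearIndependent K M.row) :
    Function.Surjective M.mulVec := by
  have hrange : LinearMap.range M.mulVecLin = ⊤ :=
    Submodule.eq_top_of_finrank_eq <| by
      rw [← Matrix.rank, hM.rank_matrix, Module.finrank_fintype_fun_eq_card]
  exact LinearMap.range_eq_top.1 hrange

theorem Matrix.mulVec_injective_of_linearIndependent_rows {m n K : Type*} [Fintype m]
    [Fintype n] [Field K] {M : Matrix m n K} (hM : LinearIndependent K M.row)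
    (hcard : Fintype.card m = Fintype.card n) : Function.Injective M.mulVec :=
  (LinearMap.injective_iff_surjective_of_finrank_eq_finrank (f := M.mulVecLin)
    (by simp [hcard])).2 (mulVec_surjective_of_linearIndependent_rows hM)

theorem LinearMap.exists_forall_norm_sub_le {E F : Type*} [AddCommGroup E] [Module ℝ E]
    [FiniteDimensional ℝ E] [NormedAddCommGroup F] [NormedSpace ℝ F] [ProperSpace F]
    (A : E →ₗ[ℝ] F) (y : F) : ∃ θ, ∀ θ', ‖y - A θ‖ ≤ ‖y - A θ'‖ := by
  obtain ⟨_, ⟨θ, rfl⟩, hθ⟩ :=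
    (range A).closed_of_finiteDimensional.exists_infDist_eq_dist ⟨0, zero_mem _⟩ y
  refine ⟨θ, fun θ' => ?_⟩
  rw [← dist_eq_norm, ← dist_eq_norm, ← hθ]
  exact Metric.infDist_le_dist_of_mem ⟨θ', rfl⟩

theorem LinearMap.convexOn_norm_sub {E F : Type*} [AddCommGroup E] [Module ℝ E]
    [NormedAddCommGroup F] [NormedSpace ℝ F] (A : E →ₗ[ℝ] F) (y : F) :
    ConvexOn ℝ Set.univ fun θ => ‖y - A θ‖ :=
  (convexOn_norm convex_univ).comp_affineMap (AffineMap.const ℝ E y - A.toAffineMap)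

theorem ConvexOn.existsUnique_isLocalMin {E : Type*} [AddCommGroup E] [Module ℝ E]
    [TopologicalSpace E] [IsTopologicalAddGroup E] [ContinuousSMul ℝ E] {f : E → ℝ}
    (hf : ConvexOn ℝ Set.univ f) (h : ∃! a, ∀ x, f a ≤ f x) : ∃! a, IsLocalMin f a :=
  h.imp fun _ ⟨hmin, huniq⟩ =>
    ⟨.of_forall hmin, fun b hb => huniq b (IsMinOn.of_isLocalMin_of_convex_univ hb hf)⟩

theorem eq_of_abs_le_of_abs_add_eq {a b m : ℝ} (ha : |a| ≤ m) (hb : |b| ≤ m)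
    (hab : |a + b| = 2 * m) : a = b := by
  rw [abs_le] at ha hb
  rcases abs_eq (by linarith : 0 ≤ 2 * m) |>.1 hab with h | h <;> linarith

theorem exists_norm_sub_smul_lt {ι : Type*} [Fintype ι] {u v : ι → ℝ} (hu : u ≠ 0)
    (hv : ∀ i, |u i| = ‖u‖ → v i = u i) : ∃ t : ℝ, ‖u - t • v‖ < ‖u‖ := by
  -- active coordinates shrink by the factor `1 - t`, the others stay below `‖u‖` for small `t`
  have hcoord : ∀ i, ∀ᶠ t in 𝓝[>] (0 : ℝ), |u i - t * v i| < ‖u‖ := by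
    intro i
    by_cases hi : |u i| = ‖u‖
    · filter_upwards [Ioo_mem_nhdsGT one_pos] with t ht
      rw [hv i hi, ← one_sub_mul, abs_mul, abs_of_pos (by linarith [ht.2]), hi]
      nlinarith [ht.1, norm_pos_iff.2 hu]
    · have hcont : Continuous fun t : ℝ => |u i - t * v i| := by fun_prop
      have h0 : |u i - 0 * v i| < ‖u‖ := by simpa using (norm_le_pi_norm u i).lt_of_ne hi
      exact nhdsWithin_le_nhds (hcont.continuousAt.eventually_lt continuousAt_const h0)
  obtain ⟨t, ht⟩ := ((Filter.eventually_all.2 hcoord).exists : ∃ t, _)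
  exact ⟨t, (pi_norm_lt_iff (norm_pos_iff.2 hu)).2 fun i => by simpa using ht i⟩

def HaarCondition {ι : Type*} {p : ℕ} (x : ι → Fin p → ℝ) : Prop :=
  ∀ s : Finset ι, s.card = p → LinearIndependent ℝ (fun i : s => x i)

namespace HaarCondition

variable {ι : Type*} {p : ℕ} {x : ι → Fin p → ℝ}

theorem exists_mulVec_eq (haar : HaarCondition x) {s : Finset ι} (hs : s.card = p)
    (c : ι → ℝ) : ∃ d, ∀ i ∈ s, (of x *ᵥ d) i = c i := by
  obtain ⟨d, hd⟩ := mulVec_surjective_of_linearIndependent_rows (M := of fun i : s => x i)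
    (haar s hs) fun i => c i
  exact ⟨d, fun i hi => congrFun hd ⟨i, hi⟩⟩

theorem eq_of_mulVec_eq (haar : HaarCondition x) {s : Finset ι} (hs : s.card = p)
    {θ θ' : Fin p → ℝ} (h : ∀ i ∈ s, (of x *ᵥ θ) i = (of x *ᵥ θ') i) : θ = θ' :=
  mulVec_injective_of_linearIndependent_rows (M := of fun i : s => x i) (haar s hs)
    (by simp [hs]) (funext fun i => h i i.2)

theorem le_card_filter_abs_eq_norm [Fintype ι] (haar : HaarCondition x)
    (hp : p ≤ Fintype.card ι) {y : ι → ℝ} {θ : Fin p → ℝ}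
    (hθ : ∀ θ', ‖y - of x *ᵥ θ‖ ≤ ‖y - of x *ᵥ θ'‖) :
    p ≤ #{i | |(y - of x *ᵥ θ) i| = ‖y - of x *ᵥ θ‖} := by
  set u := y - of x *ᵥ θ with hu
  by_contra! hlt
  have hu0 : u ≠ 0 := by
    rintro hu0
    simp [hu0] at hlt
    omega
  obtain ⟨s, hEs, -, hs⟩ := exists_subsuperset_card_eq (subset_univ _) hlt.le (by simpa using hp)
  obtain ⟨d, hd⟩ := haar.exists_mulVec_eq hs u
  obtain ⟨t, ht⟩ := exists_norm_sub_smul_lt hu0 (v := of x *ᵥ d)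
    fun i hi => hd i (hEs (by simpa using hi))
  have hstep : y - of x *ᵥ (θ + t • d) = u - t • of x *ᵥ d := by
    rw [hu, mulVec_add, mulVec_smul]; abel
  exact (hθ (θ + t • d)).not_gt (hstep ▸ ht)

theorem eq_of_forall_norm_sub_mulVec_le [Fintype ι] (haar : HaarCondition x)
    (hp : p ≤ Fintype.card ι) {y : ι → ℝ} {θ₁ θ₂ : Fin p → ℝ}
    (h₁ : ∀ θ, ‖y - of x *ᵥ θ₁‖ ≤ ‖y - of x *ᵥ θ‖)
    (h₂ : ∀ θ, ‖y - of x *ᵥ θ₂‖ ≤ ‖y - of x *ᵥ θ‖) : θ₁ = θ₂ := by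
  set u₁ := y - of x *ᵥ θ₁
  set u₂ := y - of x *ᵥ θ₂
  have hmid : y - of x *ᵥ ((2⁻¹ : ℝ) • (θ₁ + θ₂)) = (2⁻¹ : ℝ) • (u₁ + u₂) := by
    rw [mulVec_smul, mulVec_add]; module
  have hm₂ : ‖u₂‖ = ‖u₁‖ := le_antisymm (h₂ θ₁) (h₁ θ₂)
  have hmidle : ‖(2⁻¹ : ℝ) • (u₁ + u₂)‖ ≤ ‖u₁‖ := by
    rw [norm_smul]
    calc ‖(2⁻¹ : ℝ)‖ * ‖u₁ + u₂‖ ≤ 2⁻¹ * (‖u₁‖ + ‖u₂‖) := by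
          rw [Real.norm_of_nonneg (by norm_num)]; gcongr; exact norm_add_le _ _
      _ = ‖u₁‖ := by rw [hm₂]; ring
  have hmidmin : ∀ θ, ‖y - of x *ᵥ ((2⁻¹ : ℝ) • (θ₁ + θ₂))‖ ≤ ‖y - of x *ᵥ θ‖ :=
    fun θ => hmid ▸ hmidle.trans (h₁ θ)
  obtain ⟨s, hsE, hs⟩ := exists_subset_card_eq (le_card_filter_abs_eq_norm haar hp hmidmin)
  refine haar.eq_of_mulVec_eq hs fun i hi => ?_
  have hactive := (mem_filter.1 (hsE hi)).2
  -- on the active indices of the midpoint, both residuals attain the extreme value `±‖u₁‖`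
  rw [hmid, le_antisymm hmidle (hmid ▸ h₁ _)] at hactive
  have hu : u₁ i = u₂ i := by
    refine eq_of_abs_le_of_abs_add_eq (norm_le_pi_norm u₁ i) (hm₂ ▸ norm_le_pi_norm u₂ i) ?_
    simp only [Pi.smul_apply, Pi.add_apply, smul_eq_mul, abs_mul] at hactive
    rw [abs_of_pos (by norm_num : (0 : ℝ) < 2⁻¹)] at hactive
    linarith
  simpa [u₁, u₂] using hu

theorem existsUnique_forall_norm_sub_mulVec_le [Fintype ι] (haar : HaarCondition x)
    (hp : p ≤ Fintype.card ι) (y : ι → ℝ) :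
    ∃! θ, ∀ θ', ‖y - of x *ᵥ θ‖ ≤ ‖y - of x *ᵥ θ'‖ := by
  obtain ⟨θ, hθ⟩ := (of x).mulVecLin.exists_forall_norm_sub_le y
  exact ⟨θ, hθ, fun θ' hθ' => eq_of_forall_norm_sub_mulVec_le haar hp hθ' hθ⟩

end HaarCondition

theorem rho_univ_eq_norm (n p : ℕ) (x : Fin n → Fin p → ℝ) (y : Fin n → ℝ) (θ : Fin p → ℝ) :
    rho n p x y univ θ = ‖y - of x *ᵥ θ‖ := by
  unfold rho
  split_ifs with hn
  · refine le_antisymm (sup'_le _ _ fun i _ => norm_le_pi_norm (y - of x *ᵥ θ) i) ?_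
    exact (pi_norm_le_iff_of_nonneg (le_sup'_of_le _ (mem_univ hn.choose) (abs_nonneg _))).2
      fun i => le_sup'_of_le _ (mem_univ i) le_rfl
  · have : IsEmpty (Fin n) := not_nonempty_iff.1 (univ_nonempty_iff.not.1 hn)
    rw [Subsingleton.elim (y - of x *ᵥ θ) 0, norm_zero]

/-- Under the Haar condition (every `p` of the vectors `x 1, …, x n` are linearly
independent) and `n ≥ p + 1`, the Chebyshev problem `min_θ max_i |y i − x iᵀ θ|` has a
unique solution; i.e. `f_0(θ) = max_{1 ≤ i ≤ n} |y i − x iᵀ θ|` has exactly one global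
minimizer, and exactly one local minimizer. -/
theorem chebyshev_unique_solution (n p : ℕ) (hn : p + 1 ≤ n)
    (x : Fin n → Fin p → ℝ) (y : Fin n → ℝ)
    (haar : ∀ s : Finset (Fin n), s.card = p →
      LinearIndependent ℝ (fun i : s => x i)) :
    (∃! θs : Fin p → ℝ, ∀ θ : Fin p → ℝ,
        rho n p x y Finset.univ θs ≤ rho n p x y Finset.univ θ) ∧
      (∃! θs : Fin p → ℝ, IsLocalMin (rho n p x y Finset.univ) θs) := by
  have hglobal := HaarCondition.existsUnique_forall_norm_sub_mulVec_le haar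
    (by rw [Fintype.card_fin]; omega) y
  rw [show rho n p x y univ = fun θ => ‖y - of x *ᵥ θ‖ from funext (rho_univ_eq_norm n p x y)]
  exact ⟨hglobal, ((of x).mulVecLin.convexOn_norm_sub y).existsUnique_isLocalMin hglobal⟩
end

section
/- Let n ≥ p + 1, let x_1, …, x_n ∈ ℝ^p satisfy the Haar condition (every p of the vectors x_1, …, x_n are linearly independent), and let y_1, …, y_n ∈ ℝ. Then for every subset I* ⊆ {1, …, n} with |I*| = p + 1, the Chebyshev problem min_{θ ∈ ℝ^p} max_{i ∈ I*} |y_i − x_iᵀθ| has a unique solution. -/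
open Finset Matrix

theorem Matrix.mulVec_bijective_of_linearIndependent_row {K m n : Type*} [Field K]
    [Fintype m] [Fintype n] {A : Matrix m n K} (hA : LinearIndependent K A.row)
    (hcard : Fintype.card m = Fintype.card n) : Function.Bijective A.mulVec := by
  have hsurj : Function.Surjective A.mulVecLin := by
    rw [← LinearMap.range_eq_top]
    apply Submodule.eq_top_of_finrank_eq
    rw [← Matrix.rank, hA.rank_matrix, Module.finrank_fintype_fun_eq_card]
  refine ⟨?_, hsurj⟩
  exact (LinearMap.injective_iff_surjective_of_finrank_eq_finrank (by simp [hcard])).mpr hsurj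

section LinearAlgebra

variable {K α k : Type*} [Field K] [Fintype k] {x : α → k → K}

theorem LinearIndepOn.dotProduct_bijective {s : Finset α} (hs : LinearIndepOn K x s)
    (hcard : #s = Fintype.card k) :
    Function.Bijective fun (θ : k → K) (i : s) => x i ⬝ᵥ θ :=
  Matrix.mulVec_bijective_of_linearIndependent_row (A := Matrix.of fun i : s => x i) hs
    (by simpa using hcard)

theorem LinearIndepOn.exists_forall_dotProduct_eq {s : Finset α} (hs : LinearIndepOn K x s)
    (hcard : #s = Fintype.card k) (b : α → K) : ∃ θ, ∀ i ∈ s, x i ⬝ᵥ θ = b i := by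
  obtain ⟨θ, hθ⟩ := (hs.dotProduct_bijective hcard).2 fun i => b i
  exact ⟨θ, fun i hi => congrFun hθ ⟨i, hi⟩⟩

theorem LinearIndepOn.eq_of_forall_dotProduct_eq {s : Finset α} (hs : LinearIndepOn K x s)
    (hcard : #s = Fintype.card k) {θ θ' : k → K} (h : ∀ i ∈ s, x i ⬝ᵥ θ = x i ⬝ᵥ θ') :
    θ = θ' :=
  (hs.dotProduct_bijective hcard).1 <| funext fun i => h i i.2

theorem sum_mul_dotProduct_eq_zero {I : Finset α} {c : α → K}
    (hrel : ∑ i ∈ I, c i • x i = 0) (θ : k → K) : ∑ i ∈ I, c i * (x i ⬝ᵥ θ) = 0 := by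
  simp_rw [← smul_eq_mul, ← smul_dotProduct, ← sum_dotProduct, hrel, zero_dotProduct]

theorem sum_mul_sub_dotProduct_eq {I : Finset α} {c : α → K}
    (hrel : ∑ i ∈ I, c i • x i = 0) (y : α → K) (θ : k → K) :
    ∑ i ∈ I, c i * (y i - x i ⬝ᵥ θ) = ∑ i ∈ I, c i * y i := by
  rw [← sub_zero (∑ i ∈ I, c i * y i), ← sum_mul_dotProduct_eq_zero hrel θ, ← sum_sub_distrib]
  simp only [mul_sub]

variable [DecidableEq α]

theorem exists_sum_smul_eq_zero_forall_ne_zero {I : Finset α}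
    (hI : #I = Fintype.card k + 1)
    (haar : ∀ s ⊆ I, #s = Fintype.card k → LinearIndepOn K x s) :
    ∃ c : α → K, ∑ i ∈ I, c i • x i = 0 ∧ ∀ i ∈ I, c i ≠ 0 := by
  have hdep : ¬LinearIndepOn K x I := fun h => by
    simpa [hI] using LinearIndependent.fintype_card_le_finrank h
  obtain ⟨c, hrel, i₀, hi₀, hc₀⟩ := not_linearIndepOn_finset_iff.mp hdep
  refine ⟨c, hrel, fun j hj hcj => hc₀ ?_⟩
  have hrel' : ∑ i ∈ I.erase j, c i • x i = 0 := by
    rwa [sum_erase _ (by rw [hcj, zero_smul])]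
  have hind := haar (I.erase j) (erase_subset j I) (by rw [card_erase_of_mem hj, hI]; rfl)
  obtain rfl | hne := eq_or_ne i₀ j
  · exact hcj
  · exact linearIndepOn_finset_iff.mp hind c hrel' i₀ (mem_erase.mpr ⟨hne, hi₀⟩)

theorem exists_forall_dotProduct_eq_of_sum_mul_eq_zero {I : Finset α} {c : α → K} {j : α}
    (hj : j ∈ I) (hcj : c j ≠ 0) (hrel : ∑ i ∈ I, c i • x i = 0)
    (hind : LinearIndepOn K x (I.erase j)) (hcard : #(I.erase j) = Fintype.card k)
    {b : α → K} (hb : ∑ i ∈ I, c i * b i = 0) : ∃ θ, ∀ i ∈ I, x i ⬝ᵥ θ = b i := by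
  obtain ⟨θ, hθ⟩ := hind.exists_forall_dotProduct_eq hcard b
  refine ⟨θ, fun i hi => ?_⟩
  obtain rfl | hne := eq_or_ne i j
  · have := sum_mul_dotProduct_eq_zero hrel θ
    rw [← add_sum_erase _ _ hj, sum_congr rfl fun l hl => by rw [hθ l hl]] at this
    rw [← add_sum_erase _ _ hj] at hb
    exact mul_left_cancel₀ hcj (by linear_combination this - hb)
  · exact hθ i (mem_erase.mpr ⟨hne, hi⟩)

end LinearAlgebra

section Ordered

variable {K α : Type*} [Field K] [LinearOrder K] [IsStrictOrderedRing K] {I : Finset α}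
  {c f : α → K}

theorem abs_coe_sign_of_ne_zero {a : K} (ha : a ≠ 0) : |(SignType.sign a : K)| = 1 := by
  rcases ha.lt_or_gt with ha | ha <;> simp [ha]

theorem abs_sum_mul_le_sum_abs_mul {R : K} (hf : ∀ i ∈ I, |f i| ≤ R) :
    |∑ i ∈ I, c i * f i| ≤ (∑ i ∈ I, |c i|) * R :=
  calc |∑ i ∈ I, c i * f i| ≤ ∑ i ∈ I, |c i| * |f i| := by
        simpa only [abs_mul] using abs_sum_le_sum_abs (fun i => c i * f i) I
    _ ≤ ∑ i ∈ I, |c i| * R := sum_le_sum fun i hi => by gcongr; exact hf i hi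
    _ = (∑ i ∈ I, |c i|) * R := (sum_mul ..).symm

theorem mul_eq_abs_mul_of_sum_mul_eq {h : K} (hf : ∀ i ∈ I, |f i| ≤ h)
    (hsum : ∑ i ∈ I, c i * f i = (∑ i ∈ I, |c i|) * h) : ∀ i ∈ I, c i * f i = |c i| * h := by
  have hle : ∀ i ∈ I, c i * f i ≤ |c i| * h := fun i hi =>
    calc c i * f i ≤ |c i| * |f i| := by rw [← abs_mul]; exact le_abs_self _
      _ ≤ |c i| * h := by gcongr; exact hf i hi
  exact (sum_eq_sum_iff_of_le hle).mp (by rw [hsum, sum_mul])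

theorem eq_sign_mul_of_sum_mul_eq {h : K} (hc : ∀ i ∈ I, c i ≠ 0) (hf : ∀ i ∈ I, |f i| ≤ |h|)
    (hsum : ∑ i ∈ I, c i * f i = (∑ i ∈ I, |c i|) * h) :
    ∀ i ∈ I, f i = SignType.sign (c i) * h := by
  have key : ∀ i ∈ I, c i * f i = |c i| * h := by
    rcases le_or_gt 0 h with h0 | h0
    · rw [abs_of_nonneg h0] at hf
      exact mul_eq_abs_mul_of_sum_mul_eq hf hsum
    · rw [abs_of_neg h0] at hf
      have := mul_eq_abs_mul_of_sum_mul_eq (c := c) (f := (-f ·)) (h := -h)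
        (by simpa using hf) (by simp only [mul_neg, sum_neg_distrib, hsum])
      exact fun i hi => neg_inj.mp (by simpa using this i hi)
  intro i hi
  apply mul_left_cancel₀ (hc i hi)
  rw [key i hi, ← mul_assoc, self_mul_sign]

/-- When `c` is a linear relation among the `x i`, `|chebyshevLevel c y I|` is the optimal value
of the Chebyshev problem on `I`. -/
noncomputable def chebyshevLevel (c y : α → K) (I : Finset α) : K :=
  (∑ i ∈ I, c i * y i) / ∑ i ∈ I, |c i|

theorem sum_abs_mul_chebyshevLevel (y : α → K) {j : α} (hj : j ∈ I) (hcj : c j ≠ 0) :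
    (∑ i ∈ I, |c i|) * chebyshevLevel c y I = ∑ i ∈ I, c i * y i :=
  mul_div_cancel₀ _ (sum_pos' (fun i _ => abs_nonneg (c i)) ⟨j, hj, abs_pos.mpr hcj⟩).ne'

theorem sum_mul_sub_sign_mul_chebyshevLevel (y : α → K) {j : α} (hj : j ∈ I) (hcj : c j ≠ 0) :
    ∑ i ∈ I, c i * (y i - SignType.sign (c i) * chebyshevLevel c y I) = 0 := by
  simp only [mul_sub, sum_sub_distrib, ← mul_assoc, self_mul_sign, ← sum_mul]
  rw [sum_abs_mul_chebyshevLevel y hj hcj, sub_self]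

theorem sum_mul_residual_eq_sum_abs_mul_chebyshevLevel {k : Type*} [Fintype k]
    {x : α → k → K} (hrel : ∑ i ∈ I, c i • x i = 0) (y : α → K) {j : α} (hj : j ∈ I)
    (hcj : c j ≠ 0) (θ : k → K) :
    ∑ i ∈ I, c i * (y i - x i ⬝ᵥ θ) = (∑ i ∈ I, |c i|) * chebyshevLevel c y I := by
  rw [sum_mul_sub_dotProduct_eq hrel, sum_abs_mul_chebyshevLevel y hj hcj]

end Ordered

section Rho

variable {n p : ℕ} {x : Fin n → Fin p → ℝ} {y : Fin n → ℝ} {I : Finset (Fin n)}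
  {θ : Fin p → ℝ}

theorem rho_le_iff (hI : I.Nonempty) {R : ℝ} :
    rho n p x y I θ ≤ R ↔ ∀ i ∈ I, |y i - x i ⬝ᵥ θ| ≤ R := by
  rw [rho, dif_pos hI]
  exact sup'_le_iff hI _

theorem abs_sub_dotProduct_le_rho {i : Fin n} (hi : i ∈ I) :
    |y i - x i ⬝ᵥ θ| ≤ rho n p x y I θ :=
  (rho_le_iff ⟨i, hi⟩).mp le_rfl i hi

theorem abs_chebyshevLevel_le_rho {c : Fin n → ℝ} (hrel : ∑ i ∈ I, c i • x i = 0) {j : Fin n}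
    (hj : j ∈ I) (hcj : c j ≠ 0) (θ : Fin p → ℝ) :
    |chebyshevLevel c y I| ≤ rho n p x y I θ := by
  have hS : 0 < ∑ i ∈ I, |c i| := sum_pos' (fun i _ => abs_nonneg (c i)) ⟨j, hj, abs_pos.mpr hcj⟩
  refine le_of_mul_le_mul_left ?_ hS
  rw [← abs_of_pos hS, ← abs_mul,
    ← sum_mul_residual_eq_sum_abs_mul_chebyshevLevel hrel y hj hcj θ, abs_of_pos hS]
  exact abs_sum_mul_le_sum_abs_mul fun i hi => abs_sub_dotProduct_le_rho hi

end Rho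

theorem chebyshev_unique_solution_on_subsets_general (n p : ℕ)
    (x : Fin n → Fin p → ℝ) (y : Fin n → ℝ)
    (haar : ∀ s : Finset (Fin n), s.card = p →
      LinearIndependent ℝ (fun i : s => x i)) :
    ∀ Istar : Finset (Fin n), Istar.card = p + 1 →
      ∃! θs : Fin p → ℝ, ∀ θ : Fin p → ℝ,
        rho n p x y Istar θs ≤ rho n p x y Istar θ := by
  intro I hI
  obtain ⟨c, hrel, hc⟩ := exists_sum_smul_eq_zero_forall_ne_zero (x := x) (I := I)
    (by simpa using hI) fun s _ hs => haar s (by simpa using hs)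
  obtain ⟨j, hj⟩ : I.Nonempty := card_pos.mp (by omega)
  have hcard : #(I.erase j) = Fintype.card (Fin p) := by simp [card_erase_of_mem hj, hI]
  have hind : LinearIndepOn ℝ x (I.erase j) := haar _ (by simpa using hcard)
  set h := chebyshevLevel c y I
  obtain ⟨θs, hθs⟩ := exists_forall_dotProduct_eq_of_sum_mul_eq_zero hj (hc j hj) hrel hind hcard
    (sum_mul_sub_sign_mul_chebyshevLevel y hj (hc j hj))
  have hρs : rho n p x y I θs ≤ |h| := (rho_le_iff ⟨j, hj⟩).mpr fun i hi => by
    rw [hθs i hi, sub_sub_cancel, abs_mul, abs_coe_sign_of_ne_zero (hc i hi), one_mul]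
  refine ⟨θs, fun θ => hρs.trans (abs_chebyshevLevel_le_rho hrel hj (hc j hj) θ), fun θ hθ =>
    hind.eq_of_forall_dotProduct_eq hcard fun i hi => ?_⟩
  have hi' := mem_of_mem_erase hi
  have hres := eq_sign_mul_of_sum_mul_eq hc ((rho_le_iff ⟨j, hj⟩).mp ((hθ θs).trans hρs))
    (sum_mul_residual_eq_sum_abs_mul_chebyshevLevel hrel y hj (hc j hj) θ) i hi'
  rw [hθs i hi']
  linarith

/-- Under the Haar condition (every `p` of the vectors `x 1, …, x n` are linearly
independent) and `n ≥ p + 1`, for every subset `I*` of `{1, …, n}` with `|I*| = p + 1`,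
the Chebyshev problem `min_θ max_{i ∈ I*} |y i − x iᵀ θ|` has a unique solution. -/
theorem chebyshev_unique_solution_on_subsets (n p : ℕ) (hn : p + 1 ≤ n)
    (x : Fin n → Fin p → ℝ) (y : Fin n → ℝ)
    (haar : ∀ s : Finset (Fin n), s.card = p →
      LinearIndependent ℝ (fun i : s => x i)) :
    ∀ Istar : Finset (Fin n), Istar.card = p + 1 →
      ∃! θs : Fin p → ℝ, ∀ θ : Fin p → ℝ,
        rho n p x y Istar θs ≤ rho n p x y Istar θ :=
  chebyshev_unique_solution_on_subsets_general n p x y haar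
end

section
/- For all natural numbers p ≥ 0 and m ≥ 0, the following identity holds: Σ_{j=0}^{m} 2^{m−j} · C(p+j, p) = Σ_{j=0}^{m} C(p+1+m, j), where C(a, b) denotes the binomial coefficient a choose b. -/
/-! Both sides satisfy `f (m + 1) = 2 * f m + C(p + m + 1, p)` with `f 0 = 1`: on the left this is
just splitting off the last term, on the right it is Pascal's rule summed over a partial row,
together with `C(p + 1 + m, m + 1) = C(p + 1 + m, p)`. -/

open Finset

theorem sum_range_succ_two_pow_sub_mul {R : Type*} [CommSemiring R] (a : ℕ → R) (m : ℕ) :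
    ∑ j ∈ range (m + 1 + 1), 2 ^ (m + 1 - j) * a j =
      2 * ∑ j ∈ range (m + 1), 2 ^ (m - j) * a j + a (m + 1) := by
  rw [sum_range_succ, mul_sum, Nat.sub_self, pow_zero, one_mul]
  congr 1
  refine sum_congr rfl fun j hj => ?_
  rw [Nat.sub_add_comm (Nat.lt_succ_iff.mp (mem_range.mp hj)), pow_succ]
  ring

theorem Nat.sum_range_succ_choose_succ (n k : ℕ) :
    ∑ j ∈ range (k + 1 + 1), (n + 1).choose j =
      2 * ∑ j ∈ range (k + 1), n.choose j + n.choose (k + 1) := by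
  rw [sum_range_succ', Nat.choose_zero_right]
  simp only [Nat.choose_succ_succ, sum_add_distrib]
  rw [add_assoc, ← Nat.choose_zero_right n, ← sum_range_succ' (fun j => n.choose j),
    sum_range_succ, two_mul, add_assoc]

/-- For all naturals `p, m`:
`Σ_{j=0}^{m} 2^(m−j) · C(p+j, p) = Σ_{j=0}^{m} C(p+1+m, j)`. -/
theorem sum_two_pow_mul_choose_eq_sum_choose (p m : ℕ) :
    ∑ j ∈ Finset.range (m + 1), 2 ^ (m - j) * Nat.choose (p + j) p =
      ∑ j ∈ Finset.range (m + 1), Nat.choose (p + 1 + m) j := by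
  induction m with
  | zero => simp
  | succ m ih =>
    have hsymm : (p + 1 + m).choose (m + 1) = (p + (m + 1)).choose p := by
      rw [Nat.choose_symm_add, show p + 1 + m = p + (m + 1) by omega]
    rw [sum_range_succ_two_pow_sub_mul, ih, show p + 1 + (m + 1) = p + 1 + m + 1 by omega,
      Nat.sum_range_succ_choose_succ, hsymm]
end

section
/- Fix a natural number p and suppose M : ℕ → ℕ is a sequence satisfying, for every m ≥ 0, the equation Σ_{j=0}^{m} 2^{m−j} · M(j) = Σ_{j=0}^{m} C(p+1+m, j). Then M(j) = C(p+j, p) for every j ≥ 0; i.e., the sequence j ↦ C(p+j, p) is the unique solution of this family of equations. -/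
/-!
Write `T M m = ∑_{j ≤ m} 2^(m-j) M j`. Then `T M (m+1) = 2 T M m + M (m+1)`, so the system is
triangular with unit diagonal and `M` is recovered from `T M`. On the other side, Pascal's rule
gives `∑_{j ≤ k+1} C(n+1, j) = 2 ∑_{j ≤ k} C(n, j) + C(n, k+1)`, and with `n = p+1+m`,
`k = m` the last term is `C(p+m+1, p)`; so `j ↦ C(p+j, p)` satisfies the same recurrence.
-/

open Finset

def powWeightedSum (a : ℕ) (M : ℕ → ℕ) (m : ℕ) : ℕ :=
  ∑ j ∈ range (m + 1), a ^ (m - j) * M j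

@[simp]
lemma powWeightedSum_zero (a : ℕ) (M : ℕ → ℕ) : powWeightedSum a M 0 = M 0 := by
  simp [powWeightedSum]

lemma powWeightedSum_succ (a : ℕ) (M : ℕ → ℕ) (m : ℕ) :
    powWeightedSum a M (m + 1) = a * powWeightedSum a M m + M (m + 1) := by
  rw [powWeightedSum, sum_range_succ, powWeightedSum, mul_sum, Nat.sub_self, pow_zero, one_mul]
  congr 1
  refine sum_congr rfl fun j hj => ?_
  rw [← mul_assoc, ← pow_succ', Nat.sub_add_comm (mem_range_succ_iff.mp hj)]

lemma powWeightedSum_injective (a : ℕ) : Function.Injective (powWeightedSum a) := by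
  intro M N h
  funext j
  cases j with
  | zero => simpa using congrFun h 0
  | succ m =>
    have h₁ := congrFun h (m + 1)
    rw [powWeightedSum_succ, powWeightedSum_succ, congrFun h m] at h₁
    omega

lemma sum_range_choose_succ_succ (n k : ℕ) :
    ∑ j ∈ range (k + 2), (n + 1).choose j =
      2 * ∑ j ∈ range (k + 1), n.choose j + n.choose (k + 1) := by
  have hshift : ∑ j ∈ range (k + 1), n.choose j + n.choose (k + 1) =
      ∑ j ∈ range (k + 1), n.choose (j + 1) + 1 := by
    rw [← sum_range_succ, sum_range_succ', Nat.choose_zero_right]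
  rw [sum_range_succ', Nat.choose_zero_right]
  simp only [Nat.choose_succ_succ', sum_add_distrib]
  omega

lemma powWeightedSum_two_choose (p m : ℕ) :
    powWeightedSum 2 (fun j => (p + j).choose p) m =
      ∑ j ∈ range (m + 1), (p + 1 + m).choose j := by
  induction m with
  | zero => simp
  | succ m ih =>
    have hsymm : (p + 1 + m).choose (m + 1) = (p + (m + 1)).choose p := by
      rw [show p + 1 + m = p + (m + 1) by ring, Nat.choose_symm_add]
    rw [powWeightedSum_succ, ih, show p + 1 + (m + 1) = p + 1 + m + 1 by ring,
      sum_range_choose_succ_succ, hsymm]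

/-- If `M : ℕ → ℕ` satisfies, for every `m`,
`Σ_{j=0}^{m} 2^(m−j) · M j = Σ_{j=0}^{m} C(p+1+m, j)`, then `M j = C(p+j, p)` for all
`j`: the sequence `j ↦ C(p+j, p)` is the unique solution of this family of equations. -/
theorem unique_solution_choose (p : ℕ) (M : ℕ → ℕ)
    (hM : ∀ m : ℕ, ∑ j ∈ Finset.range (m + 1), 2 ^ (m - j) * M j =
      ∑ j ∈ Finset.range (m + 1), Nat.choose (p + 1 + m) j) :
    ∀ j : ℕ, M j = Nat.choose (p + j) p :=
  congrFun <| powWeightedSum_injective 2 <| funext fun m =>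
    (hM m).trans (powWeightedSum_two_choose p m).symm
end
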